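/- arXiv:1705.07960 — 2 statements merged into one kernel-verified Lean document; each statement's English description precedes it below -/
import Mathlib

section
/- Let M be a loopless matroid of rank d+1 on a finite ground set E with |E| ≥ 1. Fix e ∈ E, let α ∈ A¹(M) be the image of Σ_{F ∋ e} x_F and β ∈ A¹(M) the image of Σ_{F ∌ e} x_F (both images are independent of the choice of e). Write the reduced characteristic polynomial as χ̄_M(t) := χ_M(t)/(t−1) = m_0 t^d − m_1 t^{d−1} + ⋯ + (−1)^d m_d. Then for all k = 0, …, d, m_k = deg(α^{d−k} · β^k). -/
structure FinMatroid (E : Type*) [Fintype E] [DecidableEq E] where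
  Indep : Finset E → Prop
  indep_empty : Indep ∅
  indep_subset : ∀ ⦃I J : Finset E⦄, Indep J → I ⊆ J → Indep I
  indep_exchange : ∀ ⦃I J : Finset E⦄, Indep I → Indep J → I.card < J.card →
    ∃ e ∈ J, e ∉ I ∧ Indep (insert e I)

namespace FinMatroid

variable {E : Type*} [Fintype E] [DecidableEq E]

open Classical in
noncomputable def rank (M : FinMatroid E) (A : Finset E) : ℕ :=
  (A.powerset.filter fun I => M.Indep I).sup Finset.card

noncomputable def rk (M : FinMatroid E) : ℕ := M.rank Finset.univ

noncomputable def closure (M : FinMatroid E) (A : Finset E) : Finset E :=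
  Finset.univ.filter fun x => M.rank (insert x A) = M.rank A

def IsFlat (M : FinMatroid E) (F : Finset E) : Prop := M.closure F = F

def Loopless (M : FinMatroid E) : Prop := M.closure ∅ = ∅

/-- The type of nonempty proper flats of `M`. -/
def ProperFlat (M : FinMatroid E) : Type _ :=
  {F : Finset E // M.IsFlat F ∧ F ≠ ∅ ∧ F ≠ Finset.univ}

instance (M : FinMatroid E) : Finite (ProperFlat M) := Subtype.finite

noncomputable instance (M : FinMatroid E) : Fintype (ProperFlat M) := Fintype.ofFinite _

variable (R : Type*) [CommRing R]

/-- The ideal of relations defining the Chow ring of a matroid: the linear relations (CH1)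
`Σ_{F ∋ a} x_F = Σ_{F ∋ b} x_F` for `a, b ∈ E`, and the quadratic relations (CH2)
`x_F · x_{F'} = 0` for incomparable proper flats `F, F'`. -/
noncomputable def chowIdeal (M : FinMatroid E) : Ideal (MvPolynomial (ProperFlat M) R) :=
  Ideal.span
    ((Set.range fun ab : E × E =>
        (∑ F : ProperFlat M, if ab.1 ∈ F.1 then MvPolynomial.X F else 0) -
        (∑ F : ProperFlat M, if ab.2 ∈ F.1 then MvPolynomial.X F else 0)) ∪
     {p | ∃ F F' : ProperFlat M, ¬F.1 ⊆ F'.1 ∧ ¬F'.1 ⊆ F.1 ∧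
        p = MvPolynomial.X F * MvPolynomial.X F'})

/-- The Chow ring `A*(M)` (with coefficients in `R`). -/
abbrev ChowRing (M : FinMatroid E) := MvPolynomial (ProperFlat M) R ⧸ chowIdeal R M

/-- The quotient map from the polynomial ring onto the Chow ring. -/
noncomputable def chowMk (M : FinMatroid E) :
    MvPolynomial (ProperFlat M) R →ₐ[R] ChowRing R M :=
  Ideal.Quotient.mkₐ R (chowIdeal R M)

/-- The degree-`k` graded piece `A^k(M)` of the Chow ring: the image of the homogeneous
degree-`k` polynomials. -/
noncomputable def piece (M : FinMatroid E) (k : ℕ) : Submodule R (ChowRing R M) :=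
  (MvPolynomial.homogeneousSubmodule (ProperFlat M) R k).map (chowMk R M).toLinearMap

lemma mk_mem_piece {M : FinMatroid E} {p : MvPolynomial (ProperFlat M) R} {k : ℕ}
    (hp : p.IsHomogeneous k) : chowMk R M p ∈ piece R M k :=
  ⟨p, (MvPolynomial.mem_homogeneousSubmodule _ _).2 hp, rfl⟩

lemma mul_mem_piece {M : FinMatroid E} {k l : ℕ} {a b : ChowRing R M}
    (ha : a ∈ piece R M k) (hb : b ∈ piece R M l) : a * b ∈ piece R M (k + l) := by
  obtain ⟨p, hp, rfl⟩ := ha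
  obtain ⟨q, hq, rfl⟩ := hb
  refine ⟨p * q, ?_, by simp⟩
  simp only [SetLike.mem_coe, MvPolynomial.mem_homogeneousSubmodule] at hp hq ⊢
  exact hp.mul hq

lemma pow_mem_piece {M : FinMatroid E} {a : ChowRing R M} (ha : a ∈ piece R M 1) (m : ℕ) :
    a ^ m ∈ piece R M m := by
  induction m with
  | zero =>
      refine ⟨1, ?_, by simp⟩
      simp only [SetLike.mem_coe, MvPolynomial.mem_homogeneousSubmodule]
      simpa using MvPolynomial.isHomogeneous_one (ProperFlat M) R
  | succ n ih =>
      have h := mul_mem_piece R ih ha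
      simpa [pow_succ] using h

/-- The image in the Chow ring of the monomial attached to a flag of `d` proper flats lies in
the degree-`d` graded piece. -/
lemma flagMonomial_mem (M : FinMatroid E) (d : ℕ) (flag : Fin d → ProperFlat M) :
    chowMk R M (∏ i, MvPolynomial.X (flag i)) ∈ piece R M d := by
  refine mk_mem_piece R ?_
  have h := MvPolynomial.IsHomogeneous.prod (R := R) Finset.univ
    (fun i => MvPolynomial.X (flag i)) (fun _ => 1)
    (fun i _ => MvPolynomial.isHomogeneous_X R (flag i))
  simpa using h

/-- Homogeneity (of degree one) of an `R`-linear combination of the variables. -/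
lemma isHomogeneous_comb (M : FinMatroid E) (P : ProperFlat M → Prop) [DecidablePred P]
    (c : ProperFlat M → R) :
    MvPolynomial.IsHomogeneous
      (∑ F : ProperFlat M, if P F then MvPolynomial.C (c F) * MvPolynomial.X F else 0) 1 := by
  refine MvPolynomial.IsHomogeneous.sum _ _ _ (fun F _ => ?_)
  by_cases h : P F
  · simp only [h, if_true]
    simpa using (MvPolynomial.isHomogeneous_C (ProperFlat M) (c F)).mul
      (MvPolynomial.isHomogeneous_X R F)
  · simp [h, MvPolynomial.isHomogeneous_zero]

end FinMatroid

namespace FinMatroid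

variable {E : Type*} [Fintype E] [DecidableEq E]

open Classical in
/-- The finset of all flats of `M`. -/
noncomputable def flats (M : FinMatroid E) : Finset (Finset E) :=
  Finset.univ.filter fun F => M.IsFlat F

open Classical in
/-- `mu` is the Möbius function of the lattice of flats of `M`. -/
def IsMobius (M : FinMatroid E) (mu : Finset E → Finset E → ℤ) : Prop :=
  (∀ F ∈ M.flats, mu F F = 1) ∧
  (∀ F ∈ M.flats, ∀ F' ∈ M.flats, ¬F ⊆ F' → mu F F' = 0) ∧
  (∀ F ∈ M.flats, ∀ F' ∈ M.flats, F ⊂ F' →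
    ∑ G ∈ M.flats.filter (fun G => F ⊆ G ∧ G ⊆ F'), mu F G = 0)

open Classical in
/-- The characteristic polynomial `χ_M(t) = Σ_{F ∈ L(M)} μ(∅,F) t^{r(E) - r(F)}` of a
loopless matroid (`0` if `M` has a loop). -/
noncomputable def charPoly (M : FinMatroid E) (mu : Finset E → Finset E → ℤ) : Polynomial ℤ :=
  if M.Loopless then
    ∑ F ∈ M.flats, Polynomial.C (mu ∅ F) * Polynomial.X ^ (M.rk - M.rank F)
  else 0

end FinMatroid

/-!
Write `α = ∑_{a ∈ G} x_G` with `a` outside the top of a flag, and `β = ∑_{a ∉ G} x_G` with `a`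
in its bottom: by (CH2) every term that is not again a flag vanishes. Multiplying by `α` then
extends a saturated flag upwards in exactly one way that can still reach rank `d`, namely by
`cl(F ∪ {a})`, while multiplying by `β` extends it downwards by the hyperplanes of its bottom `B`
avoiding `a`, which is the recursion `μ(∅, B) = -∑ μ(∅, Y)` given by Weisner's theorem. Hence
`deg(α^{d-k} β^k) = (-1)^k ∑_{e ∉ F, r(F) = k} μ(∅, F)`. Weisner's theorem, applied to
`F ↦ cl(F ∪ {e})`, also gives `χ_M(t) = (t - 1) ∑_{e ∉ F} μ(∅, F) t^{d - r(F)}`, whose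
coefficients are these sums.
-/

namespace AddMonoidHom

variable {R A B : Type*} [Semiring R] [AddCommMonoid A] [Module R A] [AddCommMonoid B]
  {p : Submodule R A}

open Classical in
noncomputable def extendByZero (f : p →+ B) (x : A) : B :=
  if h : x ∈ p then f ⟨x, h⟩ else 0

lemma extendByZero_of_mem (f : p →+ B) {x : A} (hx : x ∈ p) :
    f.extendByZero x = f ⟨x, hx⟩ :=
  dif_pos hx

lemma extendByZero_add (f : p →+ B) {x y : A} (hx : x ∈ p) (hy : y ∈ p) :
    f.extendByZero (x + y) = f.extendByZero x + f.extendByZero y := by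
  rw [f.extendByZero_of_mem (add_mem hx hy), f.extendByZero_of_mem hx, f.extendByZero_of_mem hy,
    ← map_add]
  rfl

lemma extendByZero_sum (f : p →+ B) {ι : Type*} (s : Finset ι) {g : ι → A}
    (hg : ∀ i ∈ s, g i ∈ p) : f.extendByZero (∑ i ∈ s, g i) = ∑ i ∈ s, f.extendByZero (g i) := by
  classical
  induction s using Finset.induction_on with
  | empty =>
    rw [Finset.sum_empty, Finset.sum_empty, f.extendByZero_of_mem p.zero_mem]
    exact map_zero f
  | insert i s hi ih =>
    simp only [Finset.mem_insert, forall_eq_or_imp] at hg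
    rw [Finset.sum_insert hi, Finset.sum_insert hi,
      f.extendByZero_add hg.1 (Submodule.sum_mem p hg.2), ih hg.2]

end AddMonoidHom

namespace FinMatroid

variable {E : Type*} [Fintype E] [DecidableEq E] {M : FinMatroid E}

lemma card_le_rank {I A : Finset E} (hIA : I ⊆ A) (hI : M.Indep I) : I.card ≤ M.rank A :=
  Finset.le_sup (by simpa using And.intro hIA hI)

lemma rank_le {A : Finset E} {n : ℕ} (h : ∀ I ⊆ A, M.Indep I → I.card ≤ n) : M.rank A ≤ n :=
  Finset.sup_le fun I hI => by
    simp only [Finset.mem_filter, Finset.mem_powerset] at hI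
    exact h I hI.1 hI.2

lemma exists_indep_card_eq_rank (A : Finset E) : ∃ I ⊆ A, M.Indep I ∧ I.card = M.rank A := by
  classical
  obtain ⟨I, hI, hcard⟩ := Finset.exists_mem_eq_sup
    (A.powerset.filter fun I => M.Indep I) ⟨∅, by simp [M.indep_empty]⟩ Finset.card
  simp only [Finset.mem_filter, Finset.mem_powerset] at hI
  exact ⟨I, hI.1, hI.2, hcard.symm⟩

lemma rank_mono {A B : Finset E} (h : A ⊆ B) : M.rank A ≤ M.rank B :=
  rank_le fun _ hI hInd => card_le_rank (hI.trans h) hInd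

@[simp]
lemma rank_empty : M.rank ∅ = 0 :=
  Nat.le_zero.mp <| rank_le fun I hI _ => by simp [Finset.subset_empty.mp hI]

lemma rank_insert_le (A : Finset E) (x : E) : M.rank (insert x A) ≤ M.rank A + 1 := by
  refine rank_le fun I hI hInd => ?_
  have hIA : I.erase x ⊆ A := fun y hy =>
    (Finset.mem_insert.mp (hI (Finset.mem_of_mem_erase hy))).resolve_left
      (Finset.ne_of_mem_erase hy)
  have := card_le_rank hIA (M.indep_subset hInd (Finset.erase_subset x I))
  have := Finset.pred_card_le_card_erase (s := I) (a := x)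
  omega

lemma exists_indep_superset_card_eq_rank {B I : Finset E} (hIB : I ⊆ B) (hI : M.Indep I) :
    ∃ J, I ⊆ J ∧ J ⊆ B ∧ M.Indep J ∧ J.card = M.rank B := by
  induction h : M.rank B - I.card generalizing I with
  | zero => exact ⟨I, subset_rfl, hIB, hI, le_antisymm (card_le_rank hIB hI) (by omega)⟩
  | succ n ih =>
    obtain ⟨K, hKB, hK, hKcard⟩ := exists_indep_card_eq_rank (M := M) B
    obtain ⟨y, hyK, hyI, hyI'⟩ := M.indep_exchange hI hK (by omega)
    obtain ⟨J, hIJ, hJ⟩ := ih (Finset.insert_subset (hKB hyK) hIB) hyI'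
      (by rw [Finset.card_insert_of_notMem hyI]; omega)
    exact ⟨J, (Finset.subset_insert y I).trans hIJ, hJ⟩

lemma mem_closure_iff {A : Finset E} {x : E} :
    x ∈ M.closure A ↔ M.rank (insert x A) = M.rank A := by
  simp [closure]

lemma subset_closure (A : Finset E) : A ⊆ M.closure A := fun x hx => by
  rw [mem_closure_iff, Finset.insert_eq_of_mem hx]

lemma rank_insert_of_notMem_closure {A : Finset E} {x : E} (hx : x ∉ M.closure A) :
    M.rank (insert x A) = M.rank A + 1 := by
  rw [mem_closure_iff] at hx
  have := rank_mono (M := M) (Finset.subset_insert x A)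
  have := rank_insert_le (M := M) A x
  omega

lemma indep_insert_of_notMem_closure {X J : Finset E} {x : E} (hx : x ∉ M.closure X)
    (hJX : J ⊆ X) (hJ : M.Indep J) (hJcard : J.card = M.rank X) :
    x ∉ J ∧ M.Indep (insert x J) := by
  obtain ⟨K, hKX, hK, hKcard⟩ := exists_indep_card_eq_rank (M := M) (insert x X)
  rw [rank_insert_of_notMem_closure hx] at hKcard
  obtain ⟨y, hyK, hyJ, hyJ'⟩ := M.indep_exchange hJ hK (by omega)
  obtain rfl | hyX := Finset.mem_insert.mp (hKX hyK)
  · exact ⟨hyJ, hyJ'⟩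
  · have := card_le_rank (Finset.insert_subset hyX hJX) hyJ'
    rw [Finset.card_insert_of_notMem hyJ] at this
    omega

lemma rank_closure (A : Finset E) : M.rank (M.closure A) = M.rank A := by
  refine le_antisymm ?_ (rank_mono (subset_closure A))
  obtain ⟨I, hIA, hI, hIcard⟩ := exists_indep_card_eq_rank (M := M) (M.closure A)
  obtain ⟨J, hJA, hJ, hJcard⟩ := exists_indep_card_eq_rank (M := M) A
  by_contra! hlt
  obtain ⟨y, hyI, hyJ, hyJ'⟩ := M.indep_exchange hJ hI (by omega)
  have := card_le_rank (Finset.insert_subset_insert y hJA) hyJ'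
  rw [Finset.card_insert_of_notMem hyJ, mem_closure_iff.mp (hIA hyI)] at this
  omega

lemma closure_subset_of_subset {A F : Finset E} (hAF : A ⊆ F) (hF : M.IsFlat F) :
    M.closure A ⊆ F := by
  intro x hx
  by_contra hxF
  rw [← hF] at hxF
  obtain ⟨JA, hJA, hJA', hJAcard⟩ := exists_indep_card_eq_rank (M := M) A
  obtain ⟨JF, hJAJF, hJF, hJF', hJFcard⟩ :=
    exists_indep_superset_card_eq_rank (hJA.trans hAF) hJA'
  obtain ⟨hxJF, hxJF'⟩ := indep_insert_of_notMem_closure hxF hJF hJF' hJFcard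
  have := card_le_rank (Finset.insert_subset_insert x hJA)
    (M.indep_subset hxJF' (Finset.insert_subset_insert x hJAJF))
  rw [Finset.card_insert_of_notMem fun h => hxJF (hJAJF h), mem_closure_iff.mp hx] at this
  omega

lemma isFlat_closure (A : Finset E) : M.IsFlat (M.closure A) := by
  refine (Finset.Subset.antisymm (fun x hx => ?_) (subset_closure _))
  rw [mem_closure_iff, rank_closure] at hx
  rw [mem_closure_iff]
  refine le_antisymm ?_ (rank_mono (Finset.subset_insert x A))
  exact hx ▸ rank_mono (Finset.insert_subset_insert x (subset_closure A))

lemma isFlat_univ : M.IsFlat Finset.univ :=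
  Finset.Subset.antisymm (Finset.subset_univ _) (subset_closure _)

lemma IsFlat.eq_of_subset_of_rank_le {F G : Finset E} (hF : M.IsFlat F) (hFG : F ⊆ G)
    (hr : M.rank G ≤ M.rank F) : F = G := by
  refine Finset.Subset.antisymm hFG fun x hx => hF ▸ mem_closure_iff.mpr ?_
  exact le_antisymm ((rank_mono (Finset.insert_subset hx hFG)).trans hr)
    (rank_mono (Finset.subset_insert x F))

lemma IsFlat.rank_lt_rank_of_ssubset {F G : Finset E} (hF : M.IsFlat F) (hFG : F ⊂ G) :
    M.rank F < M.rank G :=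
  lt_of_not_ge fun h => hFG.ne (hF.eq_of_subset_of_rank_le hFG.subset h)

lemma IsFlat.rank_lt_rk {F : Finset E} (hF : M.IsFlat F) (hne : F ≠ Finset.univ) :
    M.rank F < M.rk :=
  hF.rank_lt_rank_of_ssubset (Finset.ssubset_univ_iff.mpr hne)

lemma Loopless.rank_pos {F : Finset E} (hM : M.Loopless) (hF : F.Nonempty) : 0 < M.rank F := by
  obtain ⟨x, hx⟩ := hF
  have hx' : x ∉ M.closure ∅ := by
    rw [show M.closure ∅ = ∅ from hM]; exact Finset.notMem_empty x
  have := rank_insert_of_notMem_closure hx'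
  exact (this ▸ Nat.succ_pos _ : 0 < M.rank {x}).trans_le (rank_mono (by simpa using hx))

lemma Loopless.rank_eq_zero_iff {F : Finset E} (hM : M.Loopless) : M.rank F = 0 ↔ F = ∅ := by
  refine ⟨fun h => ?_, fun h => h ▸ rank_empty⟩
  by_contra hF
  exact (hM.rank_pos (Finset.nonempty_iff_ne_empty.mpr hF)).ne' h

lemma IsFlat.rank_closure_insert {F : Finset E} (hF : M.IsFlat F) {a : E} (ha : a ∉ F) :
    M.rank (M.closure (insert a F)) = M.rank F + 1 := by
  rw [rank_closure, rank_insert_of_notMem_closure (hF.symm ▸ ha)]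

lemma IsFlat.eq_closure_insert {F G : Finset E} (hF : M.IsFlat F) (hG : M.IsFlat G)
    {a : E} (ha : a ∉ F) (hFG : F ⊆ G) (haG : a ∈ G) (hr : M.rank G = M.rank F + 1) :
    G = M.closure (insert a F) :=
  ((isFlat_closure _).eq_of_subset_of_rank_le
    (closure_subset_of_subset (Finset.insert_subset haG hFG) hG)
    (by rw [hF.rank_closure_insert ha, hr])).symm

section Mobius

variable {mu : Finset E → Finset E → ℤ}

@[simp]
lemma mem_flats {F : Finset E} : F ∈ M.flats ↔ M.IsFlat F := by
  simp [flats]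

lemma IsMobius.apply_empty_empty (hM : M.Loopless) (hmu : M.IsMobius mu) : mu ∅ ∅ = 1 :=
  hmu.1 ∅ (mem_flats.mpr hM)

lemma IsMobius.sum_subset_eq_zero (hM : M.Loopless) (hmu : M.IsMobius mu) {Z : Finset E}
    (hZ : M.IsFlat Z) (hZne : Z.Nonempty) : ∑ Y ∈ M.flats with Y ⊆ Z, mu ∅ Y = 0 := by
  simpa using hmu.2.2 ∅ (mem_flats.mpr hM) Z (mem_flats.mpr hZ)
    (Finset.empty_ssubset.mpr hZne)

/-- Weisner's theorem. Induct on `Z`: split `∑_{Y ⊆ Z} μ(∅, Y) = 0` according to the flat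
`cl(Y ∪ {a}) ⊆ Z`; every fibre other than the one over `Z` vanishes by induction. -/
theorem IsMobius.sum_closure_insert_eq_zero (hM : M.Loopless) (hmu : M.IsMobius mu) (a : E)
    {Z : Finset E} (hZ : M.IsFlat Z) (haZ : a ∈ Z) :
    ∑ Y ∈ M.flats with M.closure (insert a Y) = Z, mu ∅ Y = 0 := by
  induction Z using Finset.strongInduction with
  | H Z ih =>
  have hfiber : ∀ X ⊆ Z, {Y ∈ {Y ∈ M.flats | Y ⊆ Z} | M.closure (insert a Y) = X}
      = {Y ∈ M.flats | M.closure (insert a Y) = X} := by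
    intro X hXZ
    ext Y
    simp only [Finset.mem_filter]
    refine ⟨fun h => ⟨h.1.1, h.2⟩, fun h => ⟨⟨h.1, ?_⟩, h.2⟩⟩
    exact (Finset.subset_insert a Y).trans ((subset_closure _).trans (h.2 ▸ hXZ))
  have hmaps : ∀ Y ∈ {Y ∈ M.flats | Y ⊆ Z},
      M.closure (insert a Y) ∈ {X ∈ M.flats | a ∈ X ∧ X ⊆ Z} := by
    intro Y hY
    simp only [Finset.mem_filter, mem_flats] at hY ⊢
    exact ⟨isFlat_closure _, subset_closure _ (Finset.mem_insert_self a Y),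
      closure_subset_of_subset (Finset.insert_subset haZ hY.2) hZ⟩
  have htotal := hmu.sum_subset_eq_zero hM hZ ⟨a, haZ⟩
  rw [← Finset.sum_fiberwise_of_maps_to hmaps, Finset.sum_eq_single_of_mem Z
    (by simp [hZ, haZ])] at htotal
  · rwa [hfiber Z subset_rfl] at htotal
  · intro X hX hXZ
    simp only [Finset.mem_filter, mem_flats] at hX
    rw [hfiber X hX.2.2]
    exact ih X (Finset.ssubset_iff_subset_ne.mpr ⟨hX.2.2, hXZ⟩) hX.1 hX.2.1

/-- The hyperplanes of `Z` avoiding `a` are exactly the flats `Y ≠ Z` with `cl(Y ∪ {a}) = Z`. -/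
theorem IsMobius.apply_empty_eq_neg_sum (hM : M.Loopless) (hmu : M.IsMobius mu)
    {Z : Finset E} (hZ : M.IsFlat Z) {a : E} (haZ : a ∈ Z) :
    mu ∅ Z = -∑ Y ∈ M.flats with Y ⊂ Z ∧ a ∉ Y ∧ M.rank Y + 1 = M.rank Z, mu ∅ Y := by
  have hsplit : {Y ∈ M.flats | M.closure (insert a Y) = Z}
      = insert Z {Y ∈ M.flats | Y ⊂ Z ∧ a ∉ Y ∧ M.rank Y + 1 = M.rank Z} := by
    ext Y
    simp only [Finset.mem_insert, Finset.mem_filter, mem_flats]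
    constructor
    · rintro ⟨hY, rfl⟩
      by_cases haY : a ∈ Y
      · rw [Finset.insert_eq_of_mem haY, hY]
        exact Or.inl rfl
      · refine Or.inr ⟨hY, ?_, haY, (hY.rank_closure_insert haY).symm⟩
        refine Finset.ssubset_iff_subset_ne.mpr ⟨?_, fun h => haY ?_⟩
        · exact (Finset.subset_insert a Y).trans (subset_closure _)
        · exact h ▸ subset_closure _ (Finset.mem_insert_self a Y)
    · rintro (rfl | ⟨hY, hYZ, haY, hr⟩)
      · rw [Finset.insert_eq_of_mem haZ]
        exact ⟨hZ, hZ⟩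
      · exact ⟨hY, (hY.eq_closure_insert hZ haY hYZ.subset haZ hr.symm).symm⟩
  have := hmu.sum_closure_insert_eq_zero hM a hZ haZ
  rw [hsplit, Finset.sum_insert (by simp)] at this
  omega

lemma IsMobius.apply_empty_of_rank_eq_one (hM : M.Loopless) (hmu : M.IsMobius mu)
    {Z : Finset E} (hZ : M.IsFlat Z) (hr : M.rank Z = 1) : mu ∅ Z = -1 := by
  obtain ⟨a, haZ⟩ : Z.Nonempty := Finset.nonempty_iff_ne_empty.mpr (by rintro rfl; simp at hr)
  have hempty : {Y ∈ M.flats | Y ⊂ Z ∧ a ∉ Y ∧ M.rank Y + 1 = M.rank Z} = {∅} := by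
    ext Y
    simp only [Finset.mem_filter, mem_flats, Finset.mem_singleton, hr, Nat.add_eq_right,
      hM.rank_eq_zero_iff]
    constructor
    · exact fun h => h.2.2.2
    · rintro rfl
      exact ⟨hM, Finset.empty_ssubset.mpr ⟨a, haZ⟩, Finset.notMem_empty a, rfl⟩
  rw [hmu.apply_empty_eq_neg_sum hM hZ haZ, hempty, Finset.sum_singleton,
    hmu.apply_empty_empty hM]

lemma IsMobius.sum_ssubset_notMem_rank_eq (hM : M.Loopless) (hmu : M.IsMobius mu)
    {B : Finset E} (hB : M.IsFlat B) {a : E} (haB : a ∈ B) {r : ℕ} (hr : M.rank B ≤ r + 1) :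
    ∑ Y ∈ M.flats with (a ∉ Y ∧ Y ⊂ B) ∧ M.rank Y = r, mu ∅ Y =
      if M.rank B = r + 1 then -mu ∅ B else 0 := by
  split_ifs with hB'
  · rw [hmu.apply_empty_eq_neg_sum hM hB haB, neg_neg]
    refine Finset.sum_congr (Finset.filter_congr fun Y _ => ?_) fun _ _ => rfl
    rw [hB', Nat.add_right_cancel_iff]
    tauto
  · refine Finset.sum_eq_zero fun Y hY => absurd hY ?_
    simp only [Finset.mem_filter, mem_flats, not_and]
    rintro hY ⟨-, hYB⟩ hYr
    have := hY.rank_lt_rank_of_ssubset hYB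
    omega

end Mobius

section CharPoly

variable {mu : Finset E → Finset E → ℤ}

open Polynomial

lemma IsMobius.sum_smul_closure_insert_eq_zero {A : Type*} [AddCommGroup A] (hM : M.Loopless)
    (hmu : M.IsMobius mu) (a : E) (f : Finset E → A) :
    ∑ F ∈ M.flats, mu ∅ F • f (M.closure (insert a F)) = 0 := by
  have hmaps : ∀ F ∈ M.flats, M.closure (insert a F) ∈ {Z ∈ M.flats | a ∈ Z} := fun F _ => by
    simpa using ⟨isFlat_closure (M := M) _, subset_closure _ (Finset.mem_insert_self a F)⟩
  rw [← Finset.sum_fiberwise_of_maps_to hmaps]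
  refine Finset.sum_eq_zero fun Z hZ => ?_
  simp only [Finset.mem_filter, mem_flats] at hZ
  rw [Finset.sum_congr rfl fun F hF => by rw [(Finset.mem_filter.mp hF).2], ← Finset.sum_smul,
    hmu.sum_closure_insert_eq_zero hM a hZ.1 hZ.2, zero_smul]

lemma rank_le_of_notMem {F : Finset E} {d : ℕ} (hrk : M.rk = d + 1) (hF : M.IsFlat F) {e : E}
    (heF : e ∉ F) : M.rank F ≤ d := by
  have := hF.rank_lt_rk (by rintro rfl; exact heF (Finset.mem_univ e))
  omega

lemma IsMobius.sum_mem_eq_neg_sum_notMem (hM : M.Loopless) (hmu : M.IsMobius mu) {d : ℕ}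
    (hrk : M.rk = d + 1) (e : E) :
    ∑ F ∈ M.flats with e ∈ F, C (mu ∅ F) * X ^ (M.rk - M.rank F) =
      -∑ F ∈ M.flats with e ∉ F, C (mu ∅ F) * X ^ (d - M.rank F) := by
  have h := hmu.sum_smul_closure_insert_eq_zero hM e fun Z => (X ^ (M.rk - M.rank Z) : ℤ[X])
  rw [← Finset.sum_filter_add_sum_filter_not _ (e ∈ ·)] at h
  refine eq_neg_of_add_eq_zero_left (Eq.trans ?_ h)
  congr 1 <;> refine Finset.sum_congr rfl fun F hF => ?_ <;>
    rw [Finset.mem_filter, mem_flats] at hF <;> rw [smul_eq_C_mul]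
  · rw [Finset.insert_eq_of_mem hF.2, hF.1]
  · rw [hF.1.rank_closure_insert hF.2, hrk, Nat.add_sub_add_right]

theorem charPoly_eq_X_sub_one_mul (hM : M.Loopless) (hmu : M.IsMobius mu) {d : ℕ}
    (hrk : M.rk = d + 1) (e : E) :
    M.charPoly mu = (X - 1) * ∑ F ∈ M.flats with e ∉ F, C (mu ∅ F) * X ^ (d - M.rank F) := by
  have hnotMem : ∑ F ∈ M.flats with e ∉ F, C (mu ∅ F) * X ^ (M.rk - M.rank F) =
      X * ∑ F ∈ M.flats with e ∉ F, C (mu ∅ F) * X ^ (d - M.rank F) := by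
    rw [Finset.mul_sum]
    refine Finset.sum_congr rfl fun F hF => ?_
    rw [Finset.mem_filter, mem_flats] at hF
    have := rank_le_of_notMem hrk hF.1 hF.2
    rw [show M.rk - M.rank F = d - M.rank F + 1 by omega, pow_succ]
    ring
  rw [charPoly, if_pos hM, ← Finset.sum_filter_add_sum_filter_not _ (e ∈ ·),
    hmu.sum_mem_eq_neg_sum_notMem hM hrk e, hnotMem]
  ring

theorem coeff_eq_sum_of_charPoly_eq (hM : M.Loopless) (hmu : M.IsMobius mu) {d : ℕ}
    (hrk : M.rk = d + 1) (e : E) {q : ℤ[X]} (hq : M.charPoly mu = (X - 1) * q) {k : ℕ}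
    (hk : k ≤ d) : q.coeff (d - k) = ∑ F ∈ M.flats with e ∉ F ∧ M.rank F = k, mu ∅ F := by
  have hX : (X - 1 : ℤ[X]) ≠ 0 := X_sub_C_ne_zero 1
  rw [mul_left_cancel₀ hX (hq.symm.trans (charPoly_eq_X_sub_one_mul hM hmu hrk e)),
    finsetSum_coeff, Finset.sum_filter, Finset.sum_filter]
  refine Finset.sum_congr rfl fun F hF => ?_
  by_cases heF : e ∈ F
  · simp [heF]
  have hle := rank_le_of_notMem hrk (mem_flats.mp hF) heF
  by_cases hr : M.rank F = k
  · simp [heF, hr]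
  · have : d - k ≠ d - M.rank F := by omega
    simp [heF, hr, coeff_X_pow, this]

end CharPoly

section Flag

variable {mu : Finset E → Finset E → ℤ}

lemma ProperFlat.nonempty (F : ProperFlat M) : F.1.Nonempty :=
  Finset.nonempty_iff_ne_empty.mpr F.2.2.1

lemma ProperFlat.rank_lt_rk (F : ProperFlat M) : M.rank F.1 < M.rk :=
  F.2.1.rank_lt_rk F.2.2.2

/-- A flag `F₁ ⊊ ⋯ ⊊ Fₘ` of nonempty proper flats, listed from the bottom. -/
def IsFlag (l : List (ProperFlat M)) : Prop :=
  l.IsChain fun F G => F.1 ⊂ G.1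

/-- The top of a flag, with `∅` for the empty flag. -/
def flagTop (l : List (ProperFlat M)) : Finset E :=
  (l.getLast?.map fun F => F.1).getD ∅

/-- The bottom of a flag, with `E` for the empty flag. -/
def flagBot (l : List (ProperFlat M)) : Finset E :=
  (l.head?.map fun F => F.1).getD Finset.univ

@[simp] lemma flagTop_nil : flagTop ([] : List (ProperFlat M)) = ∅ := rfl

@[simp] lemma flagTop_singleton (F : ProperFlat M) : flagTop [F] = F.1 := rfl

@[simp] lemma flagTop_append_singleton (l : List (ProperFlat M)) (F : ProperFlat M) :
    flagTop (l ++ [F]) = F.1 := by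
  simp [flagTop]

lemma flagTop_cons {l : List (ProperFlat M)} (hl : l ≠ []) (F : ProperFlat M) :
    flagTop (F :: l) = flagTop l := by
  obtain ⟨G, l, rfl⟩ := List.exists_cons_of_ne_nil hl
  simp [flagTop, List.getLast?_cons_cons]

@[simp] lemma flagBot_cons (F : ProperFlat M) (l : List (ProperFlat M)) :
    flagBot (F :: l) = F.1 := rfl

lemma isFlat_flagTop (hM : M.Loopless) (l : List (ProperFlat M)) : M.IsFlat (flagTop l) := by
  rcases l.eq_nil_or_concat' with rfl | ⟨l, F, rfl⟩
  · exact hM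
  · simpa using F.2.1

lemma isFlat_flagBot (l : List (ProperFlat M)) : M.IsFlat (flagBot l) := by
  cases l with
  | nil => exact isFlat_univ
  | cons F l => exact F.2.1

lemma exists_notMem_flagTop (e : E) (l : List (ProperFlat M)) : ∃ a, a ∉ flagTop l := by
  rcases l.eq_nil_or_concat' with rfl | ⟨l, F, rfl⟩
  · exact ⟨e, Finset.notMem_empty e⟩
  · simpa [Finset.eq_univ_iff_forall] using F.2.2.2

lemma rank_flagTop_le {d : ℕ} (hrk : M.rk = d + 1) (l : List (ProperFlat M)) :
    M.rank (flagTop l) ≤ d := by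
  rcases l.eq_nil_or_concat' with rfl | ⟨l, F, rfl⟩
  · simp
  · have := F.rank_lt_rk
    simp only [flagTop_append_singleton]
    omega

lemma IsFlag.append_singleton {l : List (ProperFlat M)} (hl : IsFlag l) {F : ProperFlat M}
    (hF : flagTop l ⊂ F.1) : IsFlag (l ++ [F]) :=
  hl.append (List.isChain_singleton F) fun G hG H hH => by
    simp only [List.head?_cons, Option.mem_def, Option.some.injEq] at hH
    rw [Option.mem_def] at hG
    simpa [flagTop, hG, ← hH] using hF

lemma IsFlag.cons {l : List (ProperFlat M)} (hl : IsFlag l) {F : ProperFlat M}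
    (hF : F.1 ⊂ flagBot l) : IsFlag (F :: l) :=
  List.IsChain.cons hl fun G hG => by
    rw [Option.mem_def] at hG
    simpa [flagBot, hG] using hF

lemma IsFlag.rank_flagBot_add_length_le {l : List (ProperFlat M)} (hl : IsFlag l)
    (hne : l ≠ []) : M.rank (flagBot l) + l.length ≤ M.rank (flagTop l) + 1 := by
  induction l with
  | nil => exact absurd rfl hne
  | cons F l ih =>
    rcases eq_or_ne l [] with rfl | hl'
    · simp
    obtain ⟨G, l', rfl⟩ := List.exists_cons_of_ne_nil hl'
    rw [IsFlag, List.isChain_cons_cons] at hl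
    have := F.2.1.rank_lt_rank_of_ssubset hl.1
    have := ih hl.2 hl'
    rw [flagTop_cons hl']
    simp only [flagBot_cons, List.length_cons] at this ⊢
    omega

lemma flagBot_nonempty {l : List (ProperFlat M)} (hne : l ≠ []) : (flagBot l).Nonempty := by
  obtain ⟨F, l, rfl⟩ := List.exists_cons_of_ne_nil hne
  exact F.nonempty

lemma Loopless.rank_flagBot_pos (hM : M.Loopless) {l : List (ProperFlat M)} (hne : l ≠ []) :
    0 < M.rank (flagBot l) := by
  obtain ⟨F, l, rfl⟩ := List.exists_cons_of_ne_nil hne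
  exact hM.rank_pos F.nonempty

lemma IsFlag.length_le_rank_flagTop (hM : M.Loopless) {l : List (ProperFlat M)}
    (hl : IsFlag l) : l.length ≤ M.rank (flagTop l) := by
  rcases eq_or_ne l [] with rfl | hne
  · simp
  · have := hl.rank_flagBot_add_length_le hne
    have := hM.rank_flagBot_pos hne
    omega

lemma card_filter_covers_eq_one {T : Finset E} (hT : M.IsFlat T) {a : E} (ha : a ∉ T)
    (hr : M.rank T + 1 < M.rk) :
    (Finset.univ.filter fun G : ProperFlat M =>
      (a ∈ G.1 ∧ T ⊂ G.1) ∧ M.rank G.1 = M.rank T + 1).card = 1 := by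
  have haG₀ : a ∈ M.closure (insert a T) := subset_closure _ (Finset.mem_insert_self a T)
  let G₀ : ProperFlat M := ⟨M.closure (insert a T), isFlat_closure _,
    Finset.nonempty_iff_ne_empty.mp ⟨a, haG₀⟩,
    fun h => by
      have := hT.rank_closure_insert ha
      rw [h] at this
      exact hr.ne' this⟩
  refine Finset.card_eq_one.mpr ⟨G₀, Finset.ext fun G => ?_⟩
  simp only [Finset.mem_filter, Finset.mem_univ, true_and, Finset.mem_singleton]
  constructor
  · rintro ⟨⟨haG, hTG⟩, hrG⟩
    exact Subtype.ext (hT.eq_closure_insert G.2.1 ha hTG.subset haG hrG)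
  · rintro rfl
    refine ⟨⟨haG₀, Finset.ssubset_iff_subset_ne.mpr ⟨?_, fun h => ha (h ▸ haG₀)⟩⟩,
      hT.rank_closure_insert ha⟩
    exact (Finset.subset_insert a T).trans (subset_closure _)

lemma sum_properFlat_eq_sum_flats {A : Type*} [AddCommMonoid A] (p : Finset E → Prop)
    [DecidablePred p] (f : Finset E → A)
    (hp : ∀ Y, M.IsFlat Y → p Y → Y.Nonempty ∧ Y ≠ Finset.univ) :
    ∑ G : ProperFlat M with p G.1, f G.1 = ∑ Y ∈ M.flats with p Y, f Y := by
  refine Finset.sum_bij (fun G _ => G.1) (fun G hG => ?_) (fun _ _ _ _ h => Subtype.ext h)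
    (fun Y hY => ?_) fun _ _ => rfl
  · simpa using ⟨G.2.1, (Finset.mem_filter.mp hG).2⟩
  · simp only [Finset.mem_filter, mem_flats] at hY
    obtain ⟨hne, hnu⟩ := hp Y hY.1 hY.2
    exact ⟨⟨Y, hY.1, hne.ne_empty, hnu⟩, Finset.mem_filter.mpr ⟨Finset.mem_univ _, hY.2⟩, rfl⟩

lemma IsMobius.sum_properFlat_ssubset_notMem (hM : M.Loopless) (hmu : M.IsMobius mu)
    {B : Finset E} (hB : M.IsFlat B) {a : E} (haB : a ∈ B) {s : ℕ} (hr : M.rank B ≤ s + 2) :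
    ∑ G : ProperFlat M with a ∉ G.1 ∧ G.1 ⊂ B,
        (if M.rank G.1 = s + 1 then mu ∅ G.1 else 0) =
      if M.rank B = s + 2 then -mu ∅ B else 0 := by
  rw [← Finset.sum_filter, Finset.filter_filter,
    sum_properFlat_eq_sum_flats (fun Y => (a ∉ Y ∧ Y ⊂ B) ∧ M.rank Y = s + 1) (mu ∅),
    hmu.sum_ssubset_notMem_rank_eq hM hB haB hr]
  rintro Y - ⟨⟨-, hYB⟩, hYr⟩
  refine ⟨Finset.nonempty_iff_ne_empty.mpr fun h => ?_, ?_⟩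
  · simp [h] at hYr
  · rintro rfl
    exact hYB.2 (Finset.subset_univ B)

lemma sum_properFlat_notMem_rank_eq (e : E) (s : ℕ) :
    ∑ G : ProperFlat M with e ∉ G.1 ∧ G.1 ⊂ Finset.univ,
        (if M.rank G.1 = s + 1 then mu ∅ G.1 else 0) =
      ∑ F ∈ M.flats with e ∉ F ∧ M.rank F = s + 1, mu ∅ F := by
  rw [← Finset.sum_filter, Finset.filter_filter,
    sum_properFlat_eq_sum_flats (fun Y => (e ∉ Y ∧ Y ⊂ Finset.univ) ∧ M.rank Y = s + 1) (mu ∅)]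
  · refine Finset.sum_congr (Finset.filter_congr fun F _ => ?_) fun _ _ => rfl
    simp only [Finset.ssubset_univ_iff, ne_eq]
    constructor
    · exact fun h => ⟨h.1.1, h.2⟩
    · rintro ⟨heF, hr⟩
      exact ⟨⟨heF, by rintro rfl; exact heF (Finset.mem_univ e)⟩, hr⟩
  · rintro Y - ⟨⟨-, hY⟩, hYr⟩
    refine ⟨Finset.nonempty_iff_ne_empty.mpr fun h => ?_, Finset.ssubset_univ_iff.mp hY⟩
    simp [h] at hYr

end Flag

section ChowRing

variable (R : Type*) [CommRing R]

open MvPolynomial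

noncomputable def chowX (F : ProperFlat M) : ChowRing R M := chowMk R M (X F)

noncomputable def chowAlpha (M : FinMatroid E) (e : E) : ChowRing R M :=
  chowMk R M (∑ F : ProperFlat M, if e ∈ F.1 then X F else 0)

noncomputable def chowBeta (M : FinMatroid E) (e : E) : ChowRing R M :=
  chowMk R M (∑ F : ProperFlat M, if e ∉ F.1 then X F else 0)

noncomputable def chowMonomial (l : List (ProperFlat M)) : ChowRing R M :=
  (l.map (chowX R)).prod

@[simp] lemma chowMonomial_nil : chowMonomial R ([] : List (ProperFlat M)) = 1 := rfl

@[simp] lemma chowMonomial_cons (F : ProperFlat M) (l : List (ProperFlat M)) :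
    chowMonomial R (F :: l) = chowX R F * chowMonomial R l := by
  simp [chowMonomial]

@[simp] lemma chowMonomial_append_singleton (l : List (ProperFlat M)) (F : ProperFlat M) :
    chowMonomial R (l ++ [F]) = chowMonomial R l * chowX R F := by
  simp [chowMonomial]

lemma chowMk_sum_ite_X (p : ProperFlat M → Prop) [DecidablePred p] :
    chowMk R M (∑ F, if p F then X F else 0) = ∑ F with p F, chowX R F := by
  simp [Finset.sum_filter, apply_ite (chowMk R M), chowX]

lemma chowAlpha_eq (e a : E) : chowAlpha R M e = chowAlpha R M a :=
  Ideal.Quotient.eq.mpr (Ideal.subset_span (Or.inl ⟨(e, a), rfl⟩))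

lemma chowX_mul_chowX_eq_zero {F G : ProperFlat M} (hFG : ¬F.1 ⊆ G.1) (hGF : ¬G.1 ⊆ F.1) :
    chowX R F * chowX R G = 0 := by
  rw [chowX, chowX, ← map_mul]
  exact Ideal.Quotient.eq_zero_iff_mem.mpr (Ideal.subset_span (Or.inr ⟨F, G, hFG, hGF, rfl⟩))

lemma chowAlpha_eq_sum (e a : E) :
    chowAlpha R M e = ∑ F : ProperFlat M with a ∈ F.1, chowX R F := by
  rw [chowAlpha_eq R e a, chowAlpha, chowMk_sum_ite_X]

lemma chowBeta_eq_sum (e a : E) :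
    chowBeta R M e = ∑ F : ProperFlat M with a ∉ F.1, chowX R F := by
  have hsum (b : E) : chowBeta R M b = ∑ F, chowX R F - chowAlpha R M b := by
    rw [chowBeta, chowMk_sum_ite_X, chowAlpha_eq_sum R b b,
      ← Finset.sum_filter_add_sum_filter_not Finset.univ (fun F : ProperFlat M => b ∈ F.1)]
    ring
  rw [hsum, chowAlpha_eq R e a, ← hsum, chowBeta, chowMk_sum_ite_X]

lemma chowX_mem_piece (F : ProperFlat M) : chowX R F ∈ piece R M 1 :=
  mk_mem_piece R (isHomogeneous_X R F)

lemma chowAlpha_mem_piece (e : E) : chowAlpha R M e ∈ piece R M 1 :=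
  chowAlpha_eq_sum R e e ▸ Submodule.sum_mem _ fun F _ => chowX_mem_piece R F

lemma chowBeta_mem_piece (e : E) : chowBeta R M e ∈ piece R M 1 :=
  chowBeta_eq_sum R e e ▸ Submodule.sum_mem _ fun F _ => chowX_mem_piece R F

lemma chowMonomial_mem_piece (l : List (ProperFlat M)) :
    chowMonomial R l ∈ piece R M l.length := by
  induction l with
  | nil => simpa using mk_mem_piece R (isHomogeneous_one (ProperFlat M) R)
  | cons F l ih => simpa [add_comm] using mul_mem_piece R (chowX_mem_piece R F) ih

lemma chowAlpha_pow_mul_chowBeta_pow_mul_mem_piece (e : E) {n s k : ℕ}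
    (l : List (ProperFlat M)) (hk : n + s + l.length = k) :
    chowAlpha R M e ^ n * chowBeta R M e ^ s * chowMonomial R l ∈ piece R M k :=
  hk ▸ mul_mem_piece R (mul_mem_piece R (pow_mem_piece R (chowAlpha_mem_piece R e) n)
    (pow_mem_piece R (chowBeta_mem_piece R e) s)) (chowMonomial_mem_piece R l)

lemma chowMonomial_mul_chowX_eq_zero {l : List (ProperFlat M)} {G : ProperFlat M}
    (hTG : ¬flagTop l ⊆ G.1) (hGT : ¬G.1 ⊆ flagTop l) : chowMonomial R l * chowX R G = 0 := by
  rcases l.eq_nil_or_concat' with rfl | ⟨l, T, rfl⟩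
  · exact absurd (Finset.empty_subset _) hTG
  · simp only [flagTop_append_singleton] at hTG hGT
    rw [chowMonomial_append_singleton, mul_assoc, chowX_mul_chowX_eq_zero R hTG hGT, mul_zero]

lemma chowX_mul_chowMonomial_eq_zero {l : List (ProperFlat M)} {G : ProperFlat M}
    (hBG : ¬flagBot l ⊆ G.1) (hGB : ¬G.1 ⊆ flagBot l) : chowX R G * chowMonomial R l = 0 := by
  cases l with
  | nil => exact absurd (Finset.subset_univ _) hGB
  | cons B l =>
    simp only [flagBot_cons] at hBG hGB
    rw [chowMonomial_cons, ← mul_assoc, chowX_mul_chowX_eq_zero R hGB hBG, zero_mul]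

lemma not_subset_of_not_ssubset {α : Type*} {S T : Finset α} {a : α} (haS : a ∈ S) (haT : a ∉ T)
    (h : ¬T ⊂ S) : ¬T ⊆ S :=
  fun hTS => h (Finset.ssubset_iff_subset_ne.mpr ⟨hTS, fun hTS' => haT (hTS' ▸ haS)⟩)

/-- By (CH2), only the `G ∋ a` above the top of the flag survive. -/
lemma chowAlpha_mul_chowMonomial (e : E) (l : List (ProperFlat M)) {a : E}
    (ha : a ∉ flagTop l) :
    chowAlpha R M e * chowMonomial R l =
      ∑ G : ProperFlat M with a ∈ G.1 ∧ flagTop l ⊂ G.1, chowMonomial R (l ++ [G]) := by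
  simp only [chowMonomial_append_singleton]
  rw [chowAlpha_eq_sum R e a, Finset.sum_mul, ← Finset.filter_filter,
    Finset.sum_filter_of_ne (p := fun G : ProperFlat M => flagTop l ⊂ G.1)]
  · exact Finset.sum_congr rfl fun G _ => mul_comm _ _
  · intro G hG hne
    by_contra hTG
    have haG := (Finset.mem_filter.mp hG).2
    exact hne (chowMonomial_mul_chowX_eq_zero R (not_subset_of_not_ssubset haG ha hTG)
      fun h => ha (h haG))

/-- By (CH2), only the `G ∌ a` below the bottom of the flag survive. -/
lemma chowBeta_mul_chowMonomial (e : E) (l : List (ProperFlat M)) {a : E}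
    (ha : a ∈ flagBot l) :
    chowBeta R M e * chowMonomial R l =
      ∑ G : ProperFlat M with a ∉ G.1 ∧ G.1 ⊂ flagBot l, chowMonomial R (G :: l) := by
  simp only [chowMonomial_cons]
  rw [chowBeta_eq_sum R e a, Finset.sum_mul, ← Finset.filter_filter,
    Finset.sum_filter_of_ne (p := fun G : ProperFlat M => G.1 ⊂ flagBot l)]
  intro G hG hne
  by_contra hGB
  have haG := (Finset.mem_filter.mp hG).2
  exact hne (chowX_mul_chowMonomial_eq_zero R (fun h => haG (h ha))
    (not_subset_of_not_ssubset ha haG hGB))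

end ChowRing

section Degree

variable {d : ℕ} {mu : Finset E → Finset E → ℤ}

open MvPolynomial

variable (deg : piece ℤ M d →+ ℤ) in
def IsNormalizedOnFlags : Prop :=
  ∀ flag : Fin d → ProperFlat M, (∀ i j : Fin d, i < j → (flag i).1 ⊂ (flag j).1) →
    deg ⟨chowMk ℤ M (∏ i, X (flag i)), flagMonomial_mem ℤ M d flag⟩ = 1

variable {deg : piece ℤ M d →+ ℤ}

lemma IsNormalizedOnFlags.extendByZero_chowMonomial (hdeg : IsNormalizedOnFlags deg)
    {l : List (ProperFlat M)} (hl : IsFlag l) (hlen : l.length = d) :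
    deg.extendByZero (chowMonomial ℤ l) = 1 := by
  subst hlen
  have : Trans (fun F G : ProperFlat M => F.1 ⊂ G.1) (fun F G : ProperFlat M => F.1 ⊂ G.1)
    (fun F G : ProperFlat M => F.1 ⊂ G.1) := ⟨fun h₁ h₂ => h₁.trans h₂⟩
  have hmono := List.pairwise_iff_get.mp (List.isChain_iff_pairwise.mp hl)
  have hprod : chowMk ℤ M (∏ i, X (l.get i)) = chowMonomial ℤ l := by
    simp only [List.get_eq_getElem, Fin.prod_univ_fun_getElem, map_list_prod, List.map_map]
    rfl
  rw [← hprod, deg.extendByZero_of_mem (flagMonomial_mem ℤ M _ _), hdeg _ hmono]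

/-- `r(Fₘ) = m` says that the flag `F₁ ⊊ ⋯ ⊊ Fₘ` has ranks `1, …, m`. Each factor `α` adds a
flat on top, and only flats of the next rank can still lead to a complete flag. -/
theorem extendByZero_chowAlpha_pow_mul_chowMonomial (hM : M.Loopless) (hrk : M.rk = d + 1)
    (hdeg : IsNormalizedOnFlags deg) (e : E) (n : ℕ) {l : List (ProperFlat M)} (hl : IsFlag l)
    (hlen : n + l.length = d) :
    deg.extendByZero (chowAlpha ℤ M e ^ n * chowMonomial ℤ l) =
      if M.rank (flagTop l) = l.length then 1 else 0 := by
  induction n generalizing l with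
  | zero =>
    have := hl.length_le_rank_flagTop hM
    have := rank_flagTop_le hrk l
    rw [pow_zero, one_mul, hdeg.extendByZero_chowMonomial hl (by omega), if_pos (by omega)]
  | succ n ih =>
    have hlow := hl.length_le_rank_flagTop hM
    have hhigh := rank_flagTop_le hrk l
    obtain ⟨a, ha⟩ := exists_notMem_flagTop e l
    have hmem (G : ProperFlat M) : chowAlpha ℤ M e ^ n * chowMonomial ℤ (l ++ [G]) ∈
        piece ℤ M d := by
      simpa using chowAlpha_pow_mul_chowBeta_pow_mul_mem_piece ℤ e (s := 0) (l ++ [G])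
        (by rw [List.length_append, List.length_singleton]; omega)
    rw [pow_succ, mul_assoc, chowAlpha_mul_chowMonomial ℤ e l ha, Finset.mul_sum,
      deg.extendByZero_sum _ fun G _ => hmem G]
    rw [Finset.sum_congr rfl fun G hG =>
      have hlG := hl.append_singleton (Finset.mem_filter.mp hG).2.2
      ih hlG (by rw [List.length_append, List.length_singleton]; omega)]
    simp only [flagTop_append_singleton, List.length_append, List.length_singleton]
    rw [Finset.sum_boole, Finset.filter_filter]
    split_ifs with hr
    · rw [← hr, card_filter_covers_eq_one (isFlat_flagTop hM l) ha (by omega)]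
      rfl
    · refine Nat.cast_eq_zero.mpr (Finset.card_eq_zero.mpr (Finset.filter_eq_empty_iff.mpr ?_))
      rintro G - ⟨⟨-, hTG⟩, hG⟩
      have := (isFlat_flagTop hM l).rank_lt_rank_of_ssubset hTG
      omega

/-- Each factor `β` adds below the bottom `B` the hyperplanes of `B` avoiding a fixed `a ∈ B`,
which is the recursion for `μ(∅, B)` from Weisner's theorem. -/
theorem extendByZero_chowAlpha_pow_mul_chowBeta_pow_mul_chowMonomial (hM : M.Loopless)
    (hmu : M.IsMobius mu) (hrk : M.rk = d + 1) (hdeg : IsNormalizedOnFlags deg) (e : E)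
    (n s : ℕ) {l : List (ProperFlat M)} (hl : IsFlag l) (hne : l ≠ [])
    (hlen : n + s + l.length = d) :
    deg.extendByZero (chowAlpha ℤ M e ^ n * chowBeta ℤ M e ^ s * chowMonomial ℤ l) =
      if M.rank (flagTop l) = s + l.length ∧ M.rank (flagBot l) = s + 1 then
        (-1) ^ (s + 1) * mu ∅ (flagBot l) else 0 := by
  induction s generalizing l with
  | zero =>
    have := hl.rank_flagBot_add_length_le hne
    have := hM.rank_flagBot_pos hne
    rw [pow_zero, mul_one,
      extendByZero_chowAlpha_pow_mul_chowMonomial hM hrk hdeg e n hl (by omega)]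
    by_cases hr : M.rank (flagTop l) = l.length
    · rw [if_pos hr, if_pos ⟨by omega, by omega⟩,
        hmu.apply_empty_of_rank_eq_one hM (isFlat_flagBot l) (by omega)]
      norm_num
    · rw [if_neg hr, if_neg (by omega)]
  | succ s ih =>
    obtain ⟨a, ha⟩ := flagBot_nonempty hne
    have hβ : chowAlpha ℤ M e ^ n * chowBeta ℤ M e ^ (s + 1) * chowMonomial ℤ l =
        chowAlpha ℤ M e ^ n * chowBeta ℤ M e ^ s * (chowBeta ℤ M e * chowMonomial ℤ l) := by
      ring
    rw [hβ, chowBeta_mul_chowMonomial ℤ e l ha, Finset.mul_sum,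
      deg.extendByZero_sum _ fun G _ => chowAlpha_pow_mul_chowBeta_pow_mul_mem_piece ℤ e (G :: l)
        (by rw [List.length_cons]; omega)]
    rw [Finset.sum_congr rfl fun G hG => ih (hl.cons (Finset.mem_filter.mp hG).2.2)
      (List.cons_ne_nil G l) (by rw [List.length_cons]; omega)]
    have := hl.rank_flagBot_add_length_le hne
    simp only [flagTop_cons hne, flagBot_cons, List.length_cons]
    by_cases htop : M.rank (flagTop l) = s + 1 + l.length
    · have hsum := hmu.sum_properFlat_ssubset_notMem hM (isFlat_flagBot l) ha
        (s := s) (by omega)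
      simp only [show M.rank (flagTop l) = s + (l.length + 1) by omega, true_and, ← mul_ite_zero,
        ← Finset.mul_sum, hsum]
      by_cases hB : M.rank (flagBot l) = s + 2
      · rw [if_pos hB, if_pos ⟨by omega, by omega⟩]
        ring
      · rw [if_neg hB, if_neg (by omega)]
        ring
    · rw [if_neg (by omega)]
      exact Finset.sum_eq_zero fun G _ => if_neg (by omega)

theorem extendByZero_chowAlpha_pow_mul_chowBeta_pow (hM : M.Loopless) (hmu : M.IsMobius mu)
    (hrk : M.rk = d + 1) (hdeg : IsNormalizedOnFlags deg) (e : E) {n s : ℕ} (hns : n + s = d) :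
    deg.extendByZero (chowAlpha ℤ M e ^ n * chowBeta ℤ M e ^ s) =
      (-1) ^ s * ∑ F ∈ M.flats with e ∉ F ∧ M.rank F = s, mu ∅ F := by
  cases s with
  | zero =>
    have hempty : {F ∈ M.flats | e ∉ F ∧ M.rank F = 0} = {∅} := by
      ext F
      simp only [Finset.mem_filter, mem_flats, hM.rank_eq_zero_iff, Finset.mem_singleton]
      constructor
      · exact fun h => h.2.2
      · rintro rfl
        exact ⟨hM, Finset.notMem_empty e, rfl⟩
    simpa [hempty, hmu.apply_empty_empty hM] using
      extendByZero_chowAlpha_pow_mul_chowMonomial hM hrk hdeg e n (l := []) List.isChain_nil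
        (by simpa using hns)
  | succ s =>
    have hβ : chowAlpha ℤ M e ^ n * chowBeta ℤ M e ^ (s + 1) =
        chowAlpha ℤ M e ^ n * chowBeta ℤ M e ^ s * (chowBeta ℤ M e * chowMonomial ℤ []) := by
      rw [chowMonomial_nil]
      ring
    have hlen : n + s + 1 = d := by omega
    rw [hβ, chowBeta_mul_chowMonomial ℤ e [] (Finset.mem_univ e), Finset.mul_sum,
      deg.extendByZero_sum _ fun G _ => chowAlpha_pow_mul_chowBeta_pow_mul_mem_piece ℤ e [G] hlen]
    rw [Finset.sum_congr rfl fun G _ =>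
      extendByZero_chowAlpha_pow_mul_chowBeta_pow_mul_chowMonomial hM hmu hrk hdeg e n s
        (List.isChain_singleton G) (List.cons_ne_nil G []) hlen]
    rw [← sum_properFlat_notMem_rank_eq, Finset.mul_sum]
    refine Finset.sum_congr rfl fun G _ => ?_
    simp only [flagTop_singleton, flagBot_cons, List.length_singleton, and_self, mul_ite_zero]

end Degree

end FinMatroid

set_option synthInstance.maxHeartbeats 1000000 in
set_option maxHeartbeats 1000000 in
open FinMatroid in
/-- Let `M` be a loopless matroid of rank `d+1` on a finite nonempty ground set `E`, fix
`e ∈ E`, and let `α` (resp. `β`) be the image in `A¹(M)` of the sum of the `x_F` over the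
nonempty proper flats containing (resp. not containing) `e`. Write the reduced
characteristic polynomial as `χ̄_M(t) = χ_M(t)/(t-1) = Σ_k (-1)^k m_k t^{d-k}`. Then
`m_k = deg(α^{d-k} · β^k)` for all `0 ≤ k ≤ d`. -/
theorem reduced_charPoly_coeff_eq_deg {E : Type*} [Fintype E] [DecidableEq E]
    (M : FinMatroid E) (hM : M.Loopless) (d : ℕ) (hrk : M.rk = d + 1) (e : E)
    (mu : Finset E → Finset E → ℤ) (hmu : M.IsMobius mu)
    (q : Polynomial ℤ) (hq : M.charPoly mu = (Polynomial.X - 1) * q)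
    (deg : (piece ℤ M d) →+ ℤ)
    (hdeg : ∀ flag : Fin d → ProperFlat M, (∀ i j : Fin d, i < j → (flag i).1 ⊂ (flag j).1) →
      deg ⟨chowMk ℤ M (∏ i, MvPolynomial.X (flag i)), flagMonomial_mem ℤ M d flag⟩ = 1)
    (k : ℕ) (hk : k ≤ d) :
    (-1 : ℤ) ^ k * q.coeff (d - k) =
      deg ⟨(chowMk ℤ M (∑ F : ProperFlat M,
              if e ∈ F.1 then MvPolynomial.X F else 0)) ^ (d - k) *
           (chowMk ℤ M (∑ F : ProperFlat M,
              if e ∉ F.1 then MvPolynomial.X F else 0)) ^ k, by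
        have hα : (chowMk ℤ M (∑ F : ProperFlat M,
            if e ∈ F.1 then MvPolynomial.X F else 0)) ∈ piece ℤ M 1 := by
          refine mk_mem_piece ℤ ?_
          have h := isHomogeneous_comb ℤ M (fun F => e ∈ F.1) (fun _ => 1)
          simpa using h
        have hβ : (chowMk ℤ M (∑ F : ProperFlat M,
            if e ∉ F.1 then MvPolynomial.X F else 0)) ∈ piece ℤ M 1 := by
          refine mk_mem_piece ℤ ?_
          have h := isHomogeneous_comb ℤ M (fun F => e ∉ F.1) (fun _ => 1)
          simpa using h
        have h := mul_mem_piece ℤ (pow_mem_piece ℤ hα (d - k)) (pow_mem_piece ℤ hβ k)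
        have hd : d - k + k = d := by omega
        rwa [hd] at h⟩ := by
  rw [coeff_eq_sum_of_charPoly_eq hM hmu hrk e hq hk,
    ← extendByZero_chowAlpha_pow_mul_chowBeta_pow hM hmu hrk hdeg e (Nat.sub_add_cancel hk)]
  exact deg.extendByZero_of_mem _
end

section
/- (Weisner's theorem) Let L be a finite lattice with minimum element 0_L and maximum element 1_L, and let μ be its Möbius function. Then for every x ∈ L with x ≠ 0_L, Σ_{y ∈ L : x ∨ y = 1_L} μ(0_L, y) = 0. -/
open Classical in
/-- **Weisner's theorem.** Let `L` be a finite lattice with minimum `⊥` and maximum `⊤`, and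
let `mu` be its Möbius function (the unique function with `mu x x = 1`, `mu x y = 0` when
`¬ x ≤ y`, and `Σ_{x ≤ z ≤ y} mu x z = 0` for `x < y`). Then for every `x ≠ ⊥`,
`Σ_{y : x ⊔ y = ⊤} mu ⊥ y = 0`. -/
theorem weisner {L : Type*} [Lattice L] [BoundedOrder L] [Fintype L]
    (mu : L → L → ℤ)
    (hrefl : ∀ x : L, mu x x = 1)
    (hnle : ∀ x y : L, ¬ x ≤ y → mu x y = 0)
    (hsum : ∀ x y : L, x < y →
      ∑ z ∈ Finset.univ.filter (fun z => x ≤ z ∧ z ≤ y), mu x z = 0)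
    (x : L) (hx : x ≠ ⊥) :
    ∑ y ∈ Finset.univ.filter (fun y => x ⊔ y = ⊤), mu ⊥ y = 0 := by
  classical
  suffices h : ∀ b : L, x ≤ b →
      ∑ y ∈ Finset.univ.filter (fun y => x ⊔ y = b), mu ⊥ y = 0 from h ⊤ le_top
  intro b
  induction b using WellFoundedLT.induction with
  | _ b IH =>
    intro hb
    have hbotx : (⊥ : L) < x := bot_lt_iff_ne_bot.mpr hx
    have hbotb : (⊥ : L) < b := lt_of_lt_of_le hbotx hb
    set s : Finset L := Finset.univ.filter (fun y => y ≤ b) with hs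
    set t : Finset L := Finset.univ.filter (fun a => x ≤ a ∧ a ≤ b) with ht
    have Hfib : ∑ a ∈ t, ∑ y ∈ s.filter (fun y => x ⊔ y = a), mu ⊥ y
        = ∑ y ∈ s, mu ⊥ y := by
      apply Finset.sum_fiberwise_of_maps_to
      intro y hy
      simp only [hs, ht, Finset.mem_filter, Finset.mem_univ, true_and] at hy ⊢
      exact ⟨le_sup_left, sup_le hb hy⟩
    have Hinner : ∀ a ∈ t, s.filter (fun y => x ⊔ y = a)
        = Finset.univ.filter (fun y => x ⊔ y = a) := by
      intro a ha
      simp only [ht, Finset.mem_filter, Finset.mem_univ, true_and] at ha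
      ext y
      simp only [hs, Finset.filter_filter, Finset.mem_filter, Finset.mem_univ, true_and]
      constructor
      · exact fun hy => hy.2
      · intro hy
        exact ⟨le_trans le_sup_right (hy ▸ ha.2), hy⟩
    have Hs : ∑ y ∈ s, mu ⊥ y = 0 := by
      have := hsum ⊥ b hbotb
      rw [← this]
      apply Finset.sum_congr _ (fun _ _ => rfl)
      ext y
      simp [hs]
    have Ht : ∑ a ∈ t, ∑ y ∈ Finset.univ.filter (fun y => x ⊔ y = a), mu ⊥ y = 0 := by
      have e : ∑ a ∈ t, ∑ y ∈ Finset.univ.filter (fun y => x ⊔ y = a), mu ⊥ y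
          = ∑ a ∈ t, ∑ y ∈ s.filter (fun y => x ⊔ y = a), mu ⊥ y :=
        Finset.sum_congr rfl (fun a ha => by rw [Hinner a ha])
      rw [e, Hfib, Hs]
    have hbt : b ∈ t := by simp [ht, hb]
    have := Finset.sum_eq_single_of_mem b hbt (fun a ha hne => by
      simp only [ht, Finset.mem_filter, Finset.mem_univ, true_and] at ha
      exact IH a (lt_of_le_of_ne ha.2 hne) ha.1)
    rw [this] at Ht
    exact Ht
end
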